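/- Let {D_n}_{n∈ℕ} be a coalgebra filtration on a coalgebra D by subcoalgebras, and f : D → A a linear map into a unital associative algebra A. If the restriction of f to D_0 is convolution-invertible, then f is convolution-invertible (a filtered version of Takeuchi's Lemma). -/

import Mathlib

/-!
In the convolution ring `WithConv (D →ₗ[k] A)`, vanishing on `F 0, …, F (a - 1)` is
multiplicative in `a`: since `Δ(F n) ⊆ ∑ F i ⊗ F (n - i)`, if `p` vanishes on `F i` for `i < a`
and `q` on `F i` for `i < b`, then `p * q` vanishes on `F n` for `n < a + b`. Hence if `t`
vanishes on `F 0` then `t ^ (n + 1)` vanishes on `F n`, so the geometric series `∑ t ^ j` is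
finite on each `F n`; these partial sums glue to a linear map inverting `1 - t`. Applying this
to `f * g₀` and `g₀ * f` gives a right and a left inverse of `f`.
-/

open TensorProduct

/-- The convolution product on `Hom_k(C, A)`. -/
noncomputable def conv {k : Type*} [Field k] {C A : Type*}
    [AddCommGroup C] [Module k C] [Coalgebra k C]
    [Ring A] [Algebra k A]
    (f g : C →ₗ[k] A) : C →ₗ[k] A :=
  LinearMap.mul' k A ∘ₗ TensorProduct.map f g ∘ₗ Coalgebra.comul

/-- The convolution unit `c ↦ ε(c)·1_A`. -/
noncomputable def convUnit (k : Type*) [Field k] (C A : Type*)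
    [AddCommGroup C] [Module k C] [Coalgebra k C]
    [Ring A] [Algebra k A] : C →ₗ[k] A :=
  Algebra.linearMap k A ∘ₗ (Coalgebra.counit : C →ₗ[k] k)

open WithConv Filter

section Vanishing

variable {R C A : Type*} [CommSemiring R] [AddCommMonoid C] [Module R C] [Semiring A] [Algebra R A]
  {F : ℕ → Submodule R C}

variable (F) in
def VanishesBelow (a : ℕ) (p : WithConv (C →ₗ[R] A)) : Prop :=
  ∀ i < a, ∀ c ∈ F i, p c = 0

theorem vanishesBelow_zero (p : WithConv (C →ₗ[R] A)) : VanishesBelow F 0 p :=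
  fun _ hi ↦ absurd hi (Nat.not_lt_zero _)

theorem VanishesBelow.eq_zero (hexh : ⨆ n, F n = ⊤) {p : WithConv (C →ₗ[R] A)}
    (hp : ∀ n, VanishesBelow F n p) : p = 0 := by
  have hle : ⨆ n, F n ≤ LinearMap.ker p.ofConv :=
    iSup_le fun n c hc ↦ hp (n + 1) n n.lt_succ_self c hc
  ext c
  exact hle (hexh ▸ Submodule.mem_top)

section CoalgebraStruct

variable [CoalgebraStruct R C]

variable (F) in
def IsComulFiltered : Prop :=
  ∀ n : ℕ, ∀ c ∈ F n, Coalgebra.comul (R := R) c ∈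
    ∑ i ∈ Finset.range (n + 1),
      LinearMap.range (TensorProduct.map (F i).subtype (F (n - i)).subtype)

theorem convMul_apply_eq_zero_of_comul_mem {ι : Type*} {s : Finset ι} {G H : ι → Submodule R C}
    {c : C} (hc : Coalgebra.comul (R := R) c ∈
      ∑ i ∈ s, LinearMap.range (TensorProduct.map (G i).subtype (H i).subtype))
    {p q : WithConv (C →ₗ[R] A)} (hpq : ∀ i ∈ s, (∀ x ∈ G i, p x = 0) ∨ ∀ y ∈ H i, q y = 0) :
    (p * q) c = 0 := by
  let L := LinearMap.mul' R A ∘ₗ TensorProduct.map p.ofConv q.ofConv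
  have hle : ∑ i ∈ s, LinearMap.range (TensorProduct.map (G i).subtype (H i).subtype) ≤
      LinearMap.ker L := by
    refine Finset.sum_induction _ (· ≤ LinearMap.ker L)
      (fun _ _ ha hb ↦ (Submodule.add_eq_sup _ _).trans_le (sup_le ha hb)) bot_le ?_
    intro i hi
    rw [LinearMap.range_le_ker_iff, LinearMap.comp_assoc, ← TensorProduct.map_comp]
    rcases hpq i hi with hp | hq
    · rw [show p.ofConv ∘ₗ (G i).subtype = 0 from LinearMap.ext fun x ↦ hp x x.2,
        TensorProduct.map_zero_left, LinearMap.comp_zero]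
    · rw [show q.ofConv ∘ₗ (H i).subtype = 0 from LinearMap.ext fun y ↦ hq y y.2,
        TensorProduct.map_zero_right, LinearMap.comp_zero]
  exact hle hc

theorem VanishesBelow.mul (hF : IsComulFiltered F) {a b : ℕ} {p q : WithConv (C →ₗ[R] A)}
    (hp : VanishesBelow F a p) (hq : VanishesBelow F b q) : VanishesBelow F (a + b) (p * q) := by
  intro n hn c hc
  refine convMul_apply_eq_zero_of_comul_mem (hF n c hc) fun i hi ↦ ?_
  have hi : i < n + 1 := Finset.mem_range.1 hi
  by_cases hia : i < a
  · exact .inl (hp i hia)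
  · exact .inr (hq (n - i) (by omega))

end CoalgebraStruct

theorem VanishesBelow.pow [Coalgebra R C] (hF : IsComulFiltered F) {t : WithConv (C →ₗ[R] A)}
    (ht : VanishesBelow F 1 t) (m : ℕ) : VanishesBelow F m (t ^ m) := by
  induction m with
  | zero => exact vanishesBelow_zero _
  | succ m ih => rw [pow_succ]; exact ih.mul hF ht

end Vanishing

theorem LinearMap.exists_eventually_eq_of_eventually_const {R M N : Type*} [Semiring R]
    [AddCommMonoid M] [Module R M] [AddCommMonoid N] [Module R N] (P : ℕ → M →ₗ[R] N)
    (hP : ∀ c, ∃ a, ∀ᶠ m in atTop, P m c = a) :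
    ∃ v : M →ₗ[R] N, ∀ c, ∀ᶠ m in atTop, P m c = v c := by
  choose v hv using hP
  refine ⟨{ toFun := v, map_add' := fun x y ↦ ?_, map_smul' := fun r x ↦ ?_ }, hv⟩
  · obtain ⟨m, hxy, hx, hy⟩ := ((hv (x + y)).and ((hv x).and (hv y))).exists
    rw [← hxy, ← hx, ← hy, map_add]
  · obtain ⟨m, hrx, hx⟩ := ((hv (r • x)).and (hv x)).exists
    rw [← hrx, ← hx, map_smul, RingHom.id_apply]

theorem LinearMap.exists_eqOn_of_iSup_eq_top {R M N : Type*} [Semiring R]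
    [AddCommMonoid M] [Module R M] [AddCommMonoid N] [Module R N] {F : ℕ → Submodule R M}
    (hexh : ⨆ n, F n = ⊤) (P : ℕ → M →ₗ[R] N) (hP : ∀ n, ∀ c ∈ F n, ∀ m ≥ n, P m c = P n c) :
    ∃ v : M →ₗ[R] N, ∀ n, ∀ c ∈ F n, v c = P n c := by
  let S : Submodule R M :=
    { carrier := {c | ∃ a, ∀ᶠ m in atTop, P m c = a}
      add_mem' := fun ⟨a, ha⟩ ⟨b, hb⟩ ↦
        ⟨a + b, (ha.and hb).mono fun m h ↦ by rw [map_add, h.1, h.2]⟩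
      zero_mem' := ⟨0, .of_forall fun m ↦ map_zero _⟩
      smul_mem' := fun r c ⟨a, ha⟩ ↦ ⟨r • a, ha.mono fun m h ↦ by rw [map_smul, h]⟩ }
  have hS : ⨆ n, F n ≤ S :=
    iSup_le fun n c hc ↦ ⟨P n c, eventually_atTop.2 ⟨n, hP n c hc⟩⟩
  obtain ⟨v, hv⟩ := exists_eventually_eq_of_eventually_const P fun c ↦ hS (hexh ▸ Submodule.mem_top)
  refine ⟨v, fun n c hc ↦ ?_⟩
  obtain ⟨m, hmv, hmn⟩ := ((hv c).and (eventually_ge_atTop n)).exists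
  rw [← hmv, hP n c hc m hmn]

theorem isUnit_of_isUnit_mul_of_isUnit_mul {M : Type*} [Monoid M] {a b : M}
    (hab : IsUnit (a * b)) (hba : IsUnit (b * a)) : IsUnit a :=
  isUnit_iff_exists_and_exists.2
    ⟨⟨b * ↑hab.unit⁻¹, by rw [← mul_assoc, hab.mul_val_inv]⟩,
      ⟨↑hba.unit⁻¹ * b, by rw [mul_assoc, hba.val_inv_mul]⟩⟩

section Takeuchi

variable {R C A : Type*} [CommSemiring R] [AddCommMonoid C] [Module R C] [Coalgebra R C]
  [Ring A] [Algebra R A] {F : ℕ → Submodule R C}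

theorem isUnit_one_sub_of_vanishesBelow_one (hexh : ⨆ n, F n = ⊤)
    (hF : IsComulFiltered F) {t : WithConv (C →ₗ[R] A)} (ht : VanishesBelow F 1 t) :
    IsUnit (1 - t) := by
  let P : ℕ → WithConv (C →ₗ[R] A) := fun n ↦ ∑ j ∈ Finset.range (n + 1), t ^ j
  have hP : ∀ n, ∀ c ∈ F n, ∀ m ≥ n, P m c = P n c := by
    intro n c hc m hm
    induction m, hm using Nat.le_induction with
    | base => rfl
    | succ m hnm ih =>
      have htail : (t ^ (m + 1)) c = 0 := ht.pow hF (m + 1) n (by omega) c hc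
      simp only [P, Finset.sum_range_succ _ (m + 1), ofConv_add, LinearMap.add_apply] at ih ⊢
      rw [ih, htail, add_zero]
  obtain ⟨v, hv⟩ := LinearMap.exists_eqOn_of_iSup_eq_top hexh (fun n ↦ (P n).ofConv) hP
  have hvP : ∀ n, VanishesBelow F (n + 1) (toConv v - P n) := fun n i hi c hc ↦ by
    rw [ofConv_sub, LinearMap.sub_apply, ofConv_toConv, hv i c hc, hP i c hc n (by omega),
      sub_self]
  refine isUnit_iff_exists.2 ⟨toConv v, sub_eq_zero.1 (VanishesBelow.eq_zero hexh fun n ↦ ?_),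
    sub_eq_zero.1 (VanishesBelow.eq_zero hexh fun n ↦ ?_)⟩
  · have hsplit : (1 - t) * toConv v - 1 = (1 - t) * (toConv v - P n) - t ^ (n + 1) := by
      rw [mul_sub, mul_neg_geom_sum]; abel
    intro i hi c hc
    rw [hsplit, ofConv_sub, LinearMap.sub_apply,
      ((vanishesBelow_zero _).mul hF (hvP n)) i (by omega) c hc,
      ht.pow hF (n + 1) i (by omega) c hc, sub_zero]
  · have hsplit : toConv v * (1 - t) - 1 = (toConv v - P n) * (1 - t) - t ^ (n + 1) := by
      rw [sub_mul, geom_sum_mul_neg]; abel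
    intro i hi c hc
    rw [hsplit, ofConv_sub, LinearMap.sub_apply,
      ((hvP n).mul hF (vanishesBelow_zero _)) i (by omega) c hc,
      ht.pow hF (n + 1) i (by omega) c hc, sub_zero]

end Takeuchi

theorem takeuchi_filtered {k : Type*} [Field k] {D A : Type*}
    [AddCommGroup D] [Module k D] [Coalgebra k D]
    [Ring A] [Algebra k A]
    (F : ℕ → Submodule k D)
    (hexh : ⨆ n, F n = ⊤)
    (hfilt : ∀ n : ℕ, ∀ c ∈ F n, Coalgebra.comul (R := k) c ∈
      ∑ i ∈ Finset.range (n + 1),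
        LinearMap.range (TensorProduct.map (F i).subtype (F (n - i)).subtype))
    (f : D →ₗ[k] A)
    (hf0 : ∃ g₀ : D →ₗ[k] A, ∀ c ∈ F 0,
      conv f g₀ c = convUnit k D A c ∧ conv g₀ f c = convUnit k D A c) :
    ∃ g : D →ₗ[k] A, conv f g = convUnit k D A ∧ conv g f = convUnit k D A := by
  obtain ⟨g₀, hg₀⟩ := hf0
  -- `conv` and `convUnit` are definitionally the product and unit of Mathlib's convolution ring.
  have isUnit_of_eqOn_one (x : WithConv (D →ₗ[k] A))
      (hx : ∀ c ∈ F 0, x c = (1 : WithConv (D →ₗ[k] A)) c) : IsUnit x := by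
    rw [← sub_sub_cancel 1 x]
    refine isUnit_one_sub_of_vanishesBelow_one hexh hfilt fun i hi c hc ↦ ?_
    obtain rfl : i = 0 := by omega
    rw [ofConv_sub, LinearMap.sub_apply, hx c hc, sub_self]
  obtain ⟨g, hfg, hgf⟩ := isUnit_iff_exists.1 <| isUnit_of_isUnit_mul_of_isUnit_mul
    (isUnit_of_eqOn_one (toConv f * toConv g₀) fun c hc ↦ (hg₀ c hc).1)
    (isUnit_of_eqOn_one (toConv g₀ * toConv f) fun c hc ↦ (hg₀ c hc).2)
  exact ⟨g.ofConv, congrArg ofConv hfg, congrArg ofConv hgf⟩
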